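/- arXiv:2601.21924 — 7 statements merged into one kernel-verified Lean document; each statement's English description precedes it below -/
import Mathlib

section
/- Let d, t ≥ 1, let φ_1, …, φ_t ∈ ℝ^d be an arbitrary sequence of vectors, let Λ₀ be a symmetric positive definite d×d real matrix, and let ε_1, …, ε_t ∈ ℝ be arbitrary real numbers. Define Λ_t := Λ₀ + Σ_{s=1}^t φ_s φ_sᵀ and S_t := Σ_{s=1}^t ε_s φ_s. Then Λ_t is positive definite (hence invertible) and S_tᵀ Λ_t⁻¹ S_t ≤ Σ_{s=1}^t ε_s² (equivalently, ‖S_t‖_{Λ_t⁻¹} ≤ (Σ_{s=1}^t ε_s²)^{1/2}). -/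
open Matrix Finset

lemma vecMulVec_posSemidef' {d : ℕ} (v : Fin d → ℝ) : (vecMulVec v v).PosSemidef := by
  refine Matrix.PosSemidef.of_dotProduct_mulVec_nonneg ?_ ?_
  · ext i j
    simp [vecMulVec_apply, Matrix.conjTranspose_apply, mul_comm]
  · intro x
    have h : x ⬝ᵥ (vecMulVec v v *ᵥ x) = (v ⬝ᵥ x) * (v ⬝ᵥ x) := by
      simp only [dotProduct, mulVec, vecMulVec_apply, Finset.mul_sum, Finset.sum_mul]
      rw [Finset.sum_comm]
      exact Finset.sum_congr rfl fun i _ => Finset.sum_congr rfl fun j _ => by ring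
    simpa [h] using mul_self_nonneg (v ⬝ᵥ x)

lemma sum_mulVec' {d t : ℕ} (A : Fin t → Matrix (Fin d) (Fin d) ℝ) (y : Fin d → ℝ) :
    (∑ s, A s) *ᵥ y = ∑ s, A s *ᵥ y := by
  ext i
  simp only [mulVec, dotProduct, Finset.sum_apply, Matrix.sum_apply, Finset.sum_mul]
  rw [Finset.sum_comm]

lemma vecMulVec_mulVec' {d : ℕ} (v y : Fin d → ℝ) :
    vecMulVec v v *ᵥ y = (v ⬝ᵥ y) • v := by
  ext i
  simp only [mulVec, dotProduct, vecMulVec_apply, Pi.smul_apply, smul_eq_mul,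
    Finset.sum_mul]
  exact Finset.sum_congr rfl fun j _ => by ring

lemma dotProduct_sum'' {d t : ℕ} (x : Fin d → ℝ) (f : Fin t → Fin d → ℝ) :
    x ⬝ᵥ (∑ s, f s) = ∑ s, x ⬝ᵥ f s := by
  simp only [dotProduct, Finset.sum_apply, Finset.mul_sum]
  rw [Finset.sum_comm]

lemma sum_dotProduct'' {d t : ℕ} (x : Fin d → ℝ) (f : Fin t → Fin d → ℝ) :
    (∑ s, f s) ⬝ᵥ x = ∑ s, f s ⬝ᵥ x := by
  simp only [dotProduct, Finset.sum_apply, Finset.sum_mul]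
  rw [Finset.sum_comm]

/-- Deterministic self-normalized bound: with `Λ_t = Λ₀ + ∑ φ_s φ_sᵀ` positive definite
and `S_t = ∑ ε_s φ_s`, one has `S_tᵀ Λ_t⁻¹ S_t ≤ ∑ ε_s²`. -/
theorem deterministic_self_normalized_bound
    (d t : ℕ) (hd : 1 ≤ d) (ht : 1 ≤ t)
    (φ : Fin t → Fin d → ℝ)
    (Λ₀ : Matrix (Fin d) (Fin d) ℝ) (hΛ₀ : Λ₀.PosDef)
    (ε : Fin t → ℝ) :
    (Λ₀ + ∑ s, vecMulVec (φ s) (φ s)).PosDef ∧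
      (∑ s, ε s • φ s) ⬝ᵥ ((Λ₀ + ∑ s, vecMulVec (φ s) (φ s))⁻¹ *ᵥ (∑ s, ε s • φ s))
        ≤ ∑ s, ε s ^ 2 := by
  set Λ := Λ₀ + ∑ s, vecMulVec (φ s) (φ s) with hΛdef
  have hsumPSD : (∑ s : Fin t, vecMulVec (φ s) (φ s)).PosSemidef := by
    apply Finset.sum_induction _ Matrix.PosSemidef
    · exact fun a b ha hb => ha.add hb
    · exact Matrix.PosSemidef.zero
    · exact fun s _ => vecMulVec_posSemidef' (φ s)
  have hΛpd : Λ.PosDef := hΛ₀.add_posSemidef hsumPSD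
  refine ⟨hΛpd, ?_⟩
  set S := ∑ s, ε s • φ s with hSdef
  set y := Λ⁻¹ *ᵥ S with hydef
  have hinv : Λ * Λ⁻¹ = 1 := Matrix.mul_nonsing_inv Λ hΛpd.det_pos.ne'.isUnit
  have hS : Λ *ᵥ y = S := by
    rw [hydef, mulVec_mulVec, hinv, one_mulVec]
  have hQ : S ⬝ᵥ y = y ⬝ᵥ (Λ *ᵥ y) := by
    rw [dotProduct_comm, hS]
  have hexp : y ⬝ᵥ (Λ *ᵥ y) = y ⬝ᵥ (Λ₀ *ᵥ y) + ∑ s, (φ s ⬝ᵥ y) ^ 2 := by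
    rw [hΛdef, add_mulVec, dotProduct_add, sum_mulVec', dotProduct_sum'']
    congr 1
    refine Finset.sum_congr rfl fun s _ => ?_
    rw [vecMulVec_mulVec', dotProduct_smul, smul_eq_mul, dotProduct_comm, sq]
  have hSdot : S ⬝ᵥ y = ∑ s, ε s * (φ s ⬝ᵥ y) := by
    rw [hSdef, sum_dotProduct'']
    exact Finset.sum_congr rfl fun s _ => smul_dotProduct _ _ _
  set Q := S ⬝ᵥ y with hQdef
  have hQ0 : 0 ≤ Q := by
    rcases eq_or_ne y 0 with h | h
    · simp [hQdef, h]
    · have := hΛpd.dotProduct_mulVec_pos h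
      simp only [star_trivial] at this
      have h2 : (0:ℝ) < Q := by rw [hQ]; exact this
      exact le_of_lt h2
  have hsq : (∑ s, (φ s ⬝ᵥ y) ^ 2) ≤ Q := by
    have h0 : 0 ≤ y ⬝ᵥ (Λ₀ *ᵥ y) := by
      rcases eq_or_ne y 0 with h | h
      · simp [h]
      · have := hΛ₀.dotProduct_mulVec_pos h
        simp only [star_trivial] at this
        exact le_of_lt this
    rw [hQ, hexp]; linarith
  have hcs : Q ^ 2 ≤ (∑ s, ε s ^ 2) * Q := by
    calc Q ^ 2 = (∑ s, ε s * (φ s ⬝ᵥ y)) ^ 2 := by rw [hSdot]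
      _ ≤ (∑ s, ε s ^ 2) * ∑ s, (φ s ⬝ᵥ y) ^ 2 :=
          Finset.sum_mul_sq_le_sq_mul_sq _ _ _
      _ ≤ (∑ s, ε s ^ 2) * Q := by
          apply mul_le_mul_of_nonneg_left hsq
          exact Finset.sum_nonneg fun s _ => sq_nonneg _
  show Q ≤ ∑ s, ε s ^ 2
  rcases eq_or_lt_of_le hQ0 with h | h
  · rw [← h]; exact Finset.sum_nonneg fun s _ => sq_nonneg _
  · have := hcs
    rw [sq] at this
    exact le_of_mul_le_mul_right this h
end

section
/- Let d, t ≥ 1, let φ_1, …, φ_t ∈ ℝ^d, let Λ₀ be a symmetric positive definite d×d real matrix, let B ≥ 0, and let ε_1, …, ε_t ∈ ℝ satisfy |ε_s| ≤ B for all s ≤ t. Define Λ_t := Λ₀ + Σ_{s=1}^t φ_s φ_sᵀ and S_t := Σ_{s=1}^t ε_s φ_s. Then S_tᵀ Λ_t⁻¹ S_t ≤ B² t (equivalently, ‖S_t‖_{Λ_t⁻¹} ≤ B √t). -/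
open Matrix Finset

/-- Bounded-noise corollary of the deterministic self-normalized bound:
if `|ε_s| ≤ B` for all `s`, then `S_tᵀ Λ_t⁻¹ S_t ≤ B² t`. -/
theorem deterministic_self_normalized_bound_bounded_noise
    (d t : ℕ) (hd : 1 ≤ d) (ht : 1 ≤ t)
    (φ : Fin t → Fin d → ℝ)
    (Λ₀ : Matrix (Fin d) (Fin d) ℝ) (hΛ₀ : Λ₀.PosDef)
    (B : ℝ) (hB : 0 ≤ B)
    (ε : Fin t → ℝ) (hε : ∀ s : Fin t, |ε s| ≤ B) :
    (∑ s, ε s • φ s) ⬝ᵥ ((Λ₀ + ∑ s, vecMulVec (φ s) (φ s))⁻¹ *ᵥ (∑ s, ε s • φ s))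
      ≤ B ^ 2 * t := by
  set S : Fin d → ℝ := ∑ s, ε s • φ s with hS
  set M : Matrix (Fin d) (Fin d) ℝ := ∑ s, vecMulVec (φ s) (φ s) with hM
  have hvmv : ∀ (v y : Fin d → ℝ), vecMulVec v v *ᵥ y = (v ⬝ᵥ y) • v := by
    intro v y
    ext i
    simp [vecMulVec, mulVec, dotProduct, Finset.mul_sum, mul_comm, mul_left_comm]
  have hquad : ∀ (v y : Fin d → ℝ), y ⬝ᵥ vecMulVec v v *ᵥ y = (v ⬝ᵥ y) ^ 2 := by
    intro v y
    rw [hvmv, dotProduct_smul, smul_eq_mul, dotProduct_comm]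
    ring
  have hMps : M.PosSemidef := by
    apply Matrix.PosSemidef.of_dotProduct_mulVec_nonneg
    · show Mᴴ = M
      rw [hM, Matrix.conjTranspose_sum]
      apply Finset.sum_congr rfl
      intro s _
      ext a b
      simp [vecMulVec, Matrix.conjTranspose_apply, mul_comm]
    · intro y
      have hMy : y ⬝ᵥ M *ᵥ y = ∑ s, (φ s ⬝ᵥ y) ^ 2 := by
        rw [hM]
        have : (∑ s, vecMulVec (φ s) (φ s)) *ᵥ y = ∑ s, vecMulVec (φ s) (φ s) *ᵥ y := by
          ext i
          simp [mulVec, dotProduct, Matrix.sum_apply, Finset.sum_apply, Finset.sum_mul]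
          rw [Finset.sum_comm]
        rw [this]
        rw [show y ⬝ᵥ (∑ s, vecMulVec (φ s) (φ s) *ᵥ y) = ∑ s, y ⬝ᵥ (vecMulVec (φ s) (φ s) *ᵥ y) by
          simp [dotProduct, Finset.sum_apply, Finset.mul_sum]; rw [Finset.sum_comm]]
        exact Finset.sum_congr rfl fun s _ => hquad _ _
      simp only [star_trivial]
      rw [hMy]
      exact Finset.sum_nonneg fun s _ => sq_nonneg _
  set Λ : Matrix (Fin d) (Fin d) ℝ := Λ₀ + M with hΛdef
  have hΛpd : Λ.PosDef := hΛ₀.add_posSemidef hMps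
  set x : Fin d → ℝ := Λ⁻¹ *ᵥ S with hx
  have hΛx : Λ *ᵥ x = S := by
    rw [hx, Matrix.mulVec_mulVec, Matrix.mul_nonsing_inv _ ((Matrix.isUnit_iff_isUnit_det Λ).mp hΛpd.isUnit), Matrix.one_mulVec]
  set Q : ℝ := S ⬝ᵥ x with hQ
  -- Q is nonnegative
  have hQnn : 0 ≤ Q := by
    have := hΛpd.inv.posSemidef.dotProduct_mulVec_nonneg S
    simpa using this
  -- Q = ∑ ε s * (φ s ⬝ᵥ x)
  have hQsum : Q = ∑ s, ε s * (φ s ⬝ᵥ x) := by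
    rw [hQ]
    show (∑ s, ε s • φ s) ⬝ᵥ x = _
    simp only [dotProduct, Finset.sum_apply, Pi.smul_apply, smul_eq_mul, Finset.sum_mul,
      Finset.mul_sum]
    rw [Finset.sum_comm]
    exact Finset.sum_congr rfl fun s _ => Finset.sum_congr rfl fun i _ => by ring
  -- ∑ (φ s ⬝ᵥ x)^2 = x ⬝ᵥ M *ᵥ x
  have hMx : x ⬝ᵥ M *ᵥ x = ∑ s, (φ s ⬝ᵥ x) ^ 2 := by
    rw [hM]
    have h2 : (∑ s, vecMulVec (φ s) (φ s)) *ᵥ x = ∑ s, vecMulVec (φ s) (φ s) *ᵥ x := by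
      ext i
      simp [mulVec, dotProduct, Matrix.sum_apply, Finset.sum_apply, Finset.sum_mul]
      rw [Finset.sum_comm]
    rw [h2]
    rw [show x ⬝ᵥ (∑ s, vecMulVec (φ s) (φ s) *ᵥ x) = ∑ s, x ⬝ᵥ (vecMulVec (φ s) (φ s) *ᵥ x) by
      simp [dotProduct, Finset.sum_apply, Finset.mul_sum]; rw [Finset.sum_comm]]
    exact Finset.sum_congr rfl fun s _ => hquad _ _
  -- x ⬝ᵥ M x ≤ Q
  have hMQ : x ⬝ᵥ M *ᵥ x ≤ Q := by
    have h0 : 0 ≤ x ⬝ᵥ Λ₀ *ᵥ x := by simpa using hΛ₀.posSemidef.dotProduct_mulVec_nonneg x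
    have hlam : x ⬝ᵥ Λ *ᵥ x = Q := by
      rw [hΛx, hQ, dotProduct_comm]
    have : x ⬝ᵥ Λ *ᵥ x = x ⬝ᵥ Λ₀ *ᵥ x + x ⬝ᵥ M *ᵥ x := by
      rw [hΛdef, Matrix.add_mulVec, dotProduct_add]
    linarith
  -- ∑ ε² ≤ B² * t
  have heps : ∑ s : Fin t, (ε s) ^ 2 ≤ B ^ 2 * t := by
    calc ∑ s : Fin t, (ε s) ^ 2 ≤ ∑ s : Fin t, B ^ 2 := by
          apply Finset.sum_le_sum
          intro s _
          have := hε s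
          nlinarith [abs_nonneg (ε s), sq_abs (ε s)]
      _ = B ^ 2 * t := by simp [mul_comm]
  -- Cauchy-Schwarz
  have hCS : Q ^ 2 ≤ (∑ s : Fin t, (ε s) ^ 2) * ∑ s : Fin t, (φ s ⬝ᵥ x) ^ 2 := by
    rw [hQsum]
    exact Finset.sum_mul_sq_le_sq_mul_sq _ _ _
  have hkey : Q ^ 2 ≤ (B ^ 2 * t) * Q := by
    calc Q ^ 2 ≤ (∑ s : Fin t, (ε s) ^ 2) * ∑ s : Fin t, (φ s ⬝ᵥ x) ^ 2 := hCS
      _ ≤ (B ^ 2 * t) * Q := by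
          apply mul_le_mul heps (by rw [← hMx]; exact hMQ)
            (Finset.sum_nonneg fun s _ => sq_nonneg _)
            (by positivity)
  show Q ≤ B ^ 2 * t
  rcases hQnn.eq_or_lt with h | h
  · rw [← h]; positivity
  · have : Q * Q ≤ (B ^ 2 * t) * Q := by nlinarith [hkey]
    exact le_of_mul_le_mul_right this h
end

section
/- Let Λ be a symmetric positive semidefinite d×d real matrix, let λ > 0, and let φ, w ∈ ℝ^d. Then Λ + λI is positive definite (hence invertible) and |φᵀ (Λ + λI)⁻¹ (λ w)| ≤ √λ · ‖w‖₂ · √(φᵀ (Λ + λI)⁻¹ φ). -/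
open Matrix
open scoped MatrixOrder

private lemma smul_one_posDef (d : ℕ) (lam : ℝ) (hlam : 0 < lam) :
    (lam • (1 : Matrix (Fin d) (Fin d) ℝ)).PosDef := by
  refine ⟨?_, fun x hx => ?_⟩
  · unfold Matrix.IsHermitian
    rw [Matrix.conjTranspose_smul, Matrix.conjTranspose_one, star_trivial]
  · exact ((Matrix.PosDef.one).smul hlam).2 hx

/-- Regularization-bias (T₁) bound: for `Λ ⪰ 0` and `λ > 0`, `Λ + λI` is positive definite and
`|φᵀ (Λ + λI)⁻¹ (λ w)| ≤ √λ ‖w‖₂ √(φᵀ (Λ + λI)⁻¹ φ)`. -/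
theorem regularization_bias_bound
    (d : ℕ) (Λ : Matrix (Fin d) (Fin d) ℝ) (hΛ : Λ.PosSemidef)
    (lam : ℝ) (hlam : 0 < lam) (φ w : Fin d → ℝ) :
    (Λ + lam • (1 : Matrix (Fin d) (Fin d) ℝ)).PosDef ∧
      |φ ⬝ᵥ ((Λ + lam • (1 : Matrix (Fin d) (Fin d) ℝ))⁻¹ *ᵥ (lam • w))| ≤
        Real.sqrt lam * Real.sqrt (w ⬝ᵥ w) *
          Real.sqrt (φ ⬝ᵥ ((Λ + lam • (1 : Matrix (Fin d) (Fin d) ℝ))⁻¹ *ᵥ φ)) := by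
  set A := Λ + lam • (1 : Matrix (Fin d) (Fin d) ℝ) with hAdef
  have hA : A.PosDef := Matrix.PosDef.posSemidef_add hΛ (smul_one_posDef d lam hlam)
  refine ⟨hA, ?_⟩
  set M := A⁻¹ with hMdef
  have hM : M.PosDef := hA.inv
  -- square root of M
  set B := CFC.sqrt M with hBdef
  have hBsym : Bᵀ = B := by
    have := (CFC.sqrt_nonneg M).posSemidef.1
    simpa [Matrix.IsHermitian, Matrix.conjTranspose_eq_transpose_of_trivial] using this
  have hBB : B * B = M := CFC.sqrt_mul_sqrt_self M hM.posSemidef.nonneg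
  set u := B *ᵥ φ with hu
  set y := B *ᵥ w with hy
  have key : ∀ v₁ v₂ : Fin d → ℝ, v₁ ⬝ᵥ (M *ᵥ v₂) = (B *ᵥ v₁) ⬝ᵥ (B *ᵥ v₂) := by
    intro v₁ v₂
    rw [← hBB, ← Matrix.mulVec_mulVec, Matrix.dotProduct_mulVec]
    congr 1
    rw [← Matrix.mulVec_transpose, hBsym]
  have ha : φ ⬝ᵥ (M *ᵥ φ) = u ⬝ᵥ u := key φ φ
  have hb : w ⬝ᵥ (M *ᵥ w) = y ⬝ᵥ y := key w w
  have hc : φ ⬝ᵥ (M *ᵥ w) = u ⬝ᵥ y := key φ w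
  -- Cauchy-Schwarz
  have hCS : (u ⬝ᵥ y) ^ 2 ≤ (u ⬝ᵥ u) * (y ⬝ᵥ y) := by
    have := Finset.sum_mul_sq_le_sq_mul_sq Finset.univ u y
    simpa [dotProduct, sq] using this
  -- bound : lam * (w ⬝ᵥ M w) ≤ w ⬝ᵥ w
  have hbound : lam * (y ⬝ᵥ y) ≤ w ⬝ᵥ w := by
    set x := M *ᵥ w with hx
    have hAx : A *ᵥ x = w := by
      rw [hx, Matrix.mulVec_mulVec, hMdef, Matrix.mul_nonsing_inv _ hA.det_pos.ne'.isUnit,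
        Matrix.one_mulVec]
    have hw : w = (Λ *ᵥ x) + lam • x := by
      rw [← hAx, hAdef, Matrix.add_mulVec, Matrix.smul_mulVec, Matrix.one_mulVec]
    have hyw : y ⬝ᵥ y = w ⬝ᵥ x := by rw [← hb]
    have hzx : 0 ≤ x ⬝ᵥ (Λ *ᵥ x) := by simpa using hΛ.dotProduct_mulVec_nonneg x
    have hzz : 0 ≤ (Λ *ᵥ x) ⬝ᵥ (Λ *ᵥ x) := by
      simpa using dotProduct_star_self_nonneg (Λ *ᵥ x)
    have hcomm : (Λ *ᵥ x) ⬝ᵥ x = x ⬝ᵥ (Λ *ᵥ x) := dotProduct_comm _ _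
    have e1 : w ⬝ᵥ w = (Λ *ᵥ x) ⬝ᵥ (Λ *ᵥ x) + lam * ((Λ *ᵥ x) ⬝ᵥ x)
        + lam * (x ⬝ᵥ (Λ *ᵥ x)) + lam * lam * (x ⬝ᵥ x) := by
      rw [hw]
      simp only [dotProduct_add, add_dotProduct, dotProduct_smul,
        smul_dotProduct, smul_eq_mul]
      ring
    have e2 : w ⬝ᵥ x = (Λ *ᵥ x) ⬝ᵥ x + lam * (x ⬝ᵥ x) := by
      rw [hw]
      simp only [add_dotProduct, smul_dotProduct, smul_eq_mul]
    have h4 : 0 ≤ lam * (x ⬝ᵥ (Λ *ᵥ x)) := mul_nonneg hlam.le hzx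
    rw [hyw]
    nlinarith [hzz, h4]
  -- nonnegativity facts
  have huu : 0 ≤ u ⬝ᵥ u := by simpa using dotProduct_star_self_nonneg u
  have hyy : 0 ≤ y ⬝ᵥ y := by simpa using dotProduct_star_self_nonneg y
  -- rewrite the LHS
  have hLHS : φ ⬝ᵥ (M *ᵥ (lam • w)) = lam * (u ⬝ᵥ y) := by
    rw [Matrix.mulVec_smul, dotProduct_smul, smul_eq_mul, hc]
  have habs : |u ⬝ᵥ y| ≤ Real.sqrt (u ⬝ᵥ u) * Real.sqrt (y ⬝ᵥ y) := by
    rw [← Real.sqrt_sq_eq_abs, ← Real.sqrt_mul huu]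
    exact Real.sqrt_le_sqrt hCS
  have h2 : lam * Real.sqrt (y ⬝ᵥ y) ≤ Real.sqrt lam * Real.sqrt (w ⬝ᵥ w) := by
    have e3 : lam * Real.sqrt (y ⬝ᵥ y) = Real.sqrt (lam ^ 2 * (y ⬝ᵥ y)) := by
      rw [Real.sqrt_mul (sq_nonneg lam), Real.sqrt_sq hlam.le]
    rw [e3, ← Real.sqrt_mul hlam.le]
    apply Real.sqrt_le_sqrt
    calc lam ^ 2 * (y ⬝ᵥ y) = lam * (lam * (y ⬝ᵥ y)) := by ring
      _ ≤ lam * (w ⬝ᵥ w) := mul_le_mul_of_nonneg_left hbound hlam.le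
  rw [hLHS, abs_mul, abs_of_pos hlam, ha]
  calc lam * |u ⬝ᵥ y| ≤ lam * (Real.sqrt (u ⬝ᵥ u) * Real.sqrt (y ⬝ᵥ y)) :=
        mul_le_mul_of_nonneg_left habs hlam.le
    _ = (lam * Real.sqrt (y ⬝ᵥ y)) * Real.sqrt (u ⬝ᵥ u) := by ring
    _ ≤ (Real.sqrt lam * Real.sqrt (w ⬝ᵥ w)) * Real.sqrt (u ⬝ᵥ u) :=
        mul_le_mul_of_nonneg_right h2 (Real.sqrt_nonneg _)
end

section
/- Let d, n ≥ 1, let φ_1, …, φ_n, φ ∈ ℝ^d, let λ > 0, let H ≥ 0, and let c_1, …, c_n ∈ ℝ and V_1, …, V_n ∈ ℝ with |V_i| ≤ H for all i. Set Λ := Σ_{i=1}^n φ_i φ_iᵀ. Then |φᵀ (Λ + λI)⁻¹ Σ_{i=1}^n c_i V_i φ_i| ≤ H · √(φᵀ (Λ + λI)⁻¹ φ) · √(Σ_{i=1}^n c_i²). -/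
open Matrix Finset

lemma drb_dot_outer_sum {n d : ℕ} (φs : Fin n → Fin d → ℝ) (x y : Fin d → ℝ) :
    x ⬝ᵥ ((∑ i, vecMulVec (φs i) (φs i)) *ᵥ y) = ∑ i, (φs i ⬝ᵥ x) * (φs i ⬝ᵥ y) := by
  simp only [mulVec, dotProduct, Matrix.sum_apply, vecMulVec_apply, Finset.sum_mul,
    Finset.mul_sum]
  conv_lhs => enter [2, j]; rw [Finset.sum_comm]
  rw [Finset.sum_comm]
  refine Finset.sum_congr rfl fun i _ => ?_
  conv_rhs => rw [Finset.sum_comm]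
  refine Finset.sum_congr rfl fun j _ => ?_
  refine Finset.sum_congr rfl fun k _ => ?_
  ring

lemma drb_sum_smul_dot {n d : ℕ} (w : Fin n → ℝ) (φs : Fin n → Fin d → ℝ) (y : Fin d → ℝ) :
    (∑ i, w i • φs i) ⬝ᵥ y = ∑ i, w i * (φs i ⬝ᵥ y) := by
  simp only [dotProduct, Finset.sum_apply, Pi.smul_apply, smul_eq_mul, Finset.sum_mul,
    Finset.mul_sum]
  rw [Finset.sum_comm]
  exact Finset.sum_congr rfl fun i _ => Finset.sum_congr rfl fun j _ => by ring

lemma drb_abs_dot_le {d : ℕ} (a b : Fin d → ℝ) :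
    |a ⬝ᵥ b| ≤ Real.sqrt (a ⬝ᵥ a) * Real.sqrt (b ⬝ᵥ b) := by
  have h := Finset.sum_mul_sq_le_sq_mul_sq Finset.univ a b
  have h1 : |a ⬝ᵥ b| = Real.sqrt ((a ⬝ᵥ b) ^ 2) := (Real.sqrt_sq_eq_abs _).symm
  have ha : 0 ≤ a ⬝ᵥ a := Finset.sum_nonneg fun i _ => mul_self_nonneg _
  rw [h1, ← Real.sqrt_mul ha]
  apply Real.sqrt_le_sqrt
  simpa [dotProduct, sq] using h

lemma drb_symm_of_herm {m : Type*} [Fintype m] {S : Matrix m m ℝ} (h : S.IsHermitian) :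
    Sᵀ = S := by
  ext i j
  simpa using congrFun (congrFun h.eq i) j


/-- The `T₂^{(ω)}` bound: with `Λ = ∑ φᵢ φᵢᵀ`, `|Vᵢ| ≤ H`, one has
`|φᵀ (Λ + λI)⁻¹ ∑ cᵢ Vᵢ φᵢ| ≤ H √(φᵀ (Λ + λI)⁻¹ φ) √(∑ cᵢ²)`. -/
theorem density_ratio_error_bound
    (d n : ℕ) (hd : 1 ≤ d) (hn : 1 ≤ n)
    (φs : Fin n → Fin d → ℝ) (φ : Fin d → ℝ)
    (lam : ℝ) (hlam : 0 < lam)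
    (H : ℝ) (hH : 0 ≤ H)
    (c V : Fin n → ℝ) (hV : ∀ i, |V i| ≤ H) :
    |φ ⬝ᵥ (((∑ i, vecMulVec (φs i) (φs i)) + lam • (1 : Matrix (Fin d) (Fin d) ℝ))⁻¹ *ᵥ
        (∑ i, (c i * V i) • φs i))| ≤
      H * Real.sqrt (φ ⬝ᵥ (((∑ i, vecMulVec (φs i) (φs i)) +
            lam • (1 : Matrix (Fin d) (Fin d) ℝ))⁻¹ *ᵥ φ)) *
        Real.sqrt (∑ i, c i ^ 2) := by
  set Λ : Matrix (Fin d) (Fin d) ℝ := ∑ i, vecMulVec (φs i) (φs i) with hΛdef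
  set A : Matrix (Fin d) (Fin d) ℝ := Λ + lam • 1 with hAdef
  set M : Matrix (Fin d) (Fin d) ℝ := A⁻¹ with hMdef
  set x : Fin d → ℝ := ∑ i, (c i * V i) • φs i with hxdef
  -- positive semidefiniteness of Λ
  have hΛps : Λ.PosSemidef := by
    refine Matrix.PosSemidef.of_dotProduct_mulVec_nonneg ?_ fun z => ?_
    · rw [hΛdef]
      ext i j
      simp [Matrix.conjTranspose_apply, Matrix.sum_apply, vecMulVec_apply, mul_comm]
    · rw [star_trivial, hΛdef, drb_dot_outer_sum]
      exact Finset.sum_nonneg fun i _ => mul_self_nonneg _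
  have hIpd : (lam • (1 : Matrix (Fin d) (Fin d) ℝ)).PosDef := by
    rw [Matrix.smul_one_eq_diagonal]
    exact Matrix.posDef_diagonal_iff.mpr fun _ => hlam
  have hApd : A.PosDef := Matrix.PosDef.posSemidef_add hΛps hIpd
  have hMpd : M.PosDef := hApd.inv
  have hMps : M.PosSemidef := hMpd.posSemidef
  -- A *ᵥ (M *ᵥ z) = z
  have hdet : IsUnit A.det := isUnit_iff_ne_zero.mpr hApd.det_pos.ne'
  have hAM : ∀ z : Fin d → ℝ, A *ᵥ (M *ᵥ z) = z := by
    intro z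
    rw [hMdef, Matrix.mulVec_mulVec, Matrix.mul_nonsing_inv _ hdet, Matrix.one_mulVec]
  -- square root of M
  obtain ⟨S, hSS, hSsymm⟩ : ∃ S : Matrix (Fin d) (Fin d) ℝ, S * S = M ∧ Sᵀ = S := by
    open scoped MatrixOrder in
    exact ⟨CFC.sqrt M, CFC.sqrt_mul_sqrt_self M hMps.nonneg,
      drb_symm_of_herm (CFC.sqrt_nonneg M).posSemidef.isHermitian⟩
  have hkey : ∀ u v : Fin d → ℝ, u ⬝ᵥ (M *ᵥ v) = (S *ᵥ u) ⬝ᵥ (S *ᵥ v) := by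
    intro u v
    rw [← hSS, ← Matrix.mulVec_mulVec, Matrix.dotProduct_mulVec u S, ← Matrix.mulVec_transpose,
      hSsymm]
  have hMself : ∀ u : Fin d → ℝ, (S *ᵥ u) ⬝ᵥ (S *ᵥ u) = u ⬝ᵥ (M *ᵥ u) := fun u => (hkey u u).symm
  -- step 1: Cauchy–Schwarz in the M-inner product
  have step1 : |φ ⬝ᵥ (M *ᵥ x)| ≤
      Real.sqrt (φ ⬝ᵥ (M *ᵥ φ)) * Real.sqrt (x ⬝ᵥ (M *ᵥ x)) := by
    rw [hkey]
    calc |(S *ᵥ φ) ⬝ᵥ (S *ᵥ x)| ≤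
        Real.sqrt ((S *ᵥ φ) ⬝ᵥ (S *ᵥ φ)) * Real.sqrt ((S *ᵥ x) ⬝ᵥ (S *ᵥ x)) :=
          drb_abs_dot_le _ _
      _ = Real.sqrt (φ ⬝ᵥ (M *ᵥ φ)) * Real.sqrt (x ⬝ᵥ (M *ᵥ x)) := by
          rw [hMself, hMself]
  -- step 2: x ⬝ᵥ M x ≤ ∑ (cᵢ Vᵢ)²
  set w : Fin n → ℝ := fun i => c i * V i with hwdef
  set y : Fin d → ℝ := M *ᵥ x with hydef
  have hxy : x ⬝ᵥ y = ∑ i, w i * (φs i ⬝ᵥ y) := drb_sum_smul_dot w φs y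
  have hΛy : y ⬝ᵥ (Λ *ᵥ y) = ∑ i, (φs i ⬝ᵥ y) ^ 2 := by
    rw [hΛdef, drb_dot_outer_sum]
    exact Finset.sum_congr rfl fun i _ => (sq _).symm
  have hyy : 0 ≤ y ⬝ᵥ y := Finset.sum_nonneg fun i _ => mul_self_nonneg _
  have hyAy : y ⬝ᵥ (A *ᵥ y) = x ⬝ᵥ y := by
    rw [hydef, hAM, dotProduct_comm]
  have hΛ_le : y ⬝ᵥ (Λ *ᵥ y) ≤ x ⬝ᵥ y := by
    have hexp : y ⬝ᵥ (A *ᵥ y) = y ⬝ᵥ (Λ *ᵥ y) + lam * (y ⬝ᵥ y) := by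
      rw [hAdef, Matrix.add_mulVec, dotProduct_add, Matrix.smul_mulVec,
        Matrix.one_mulVec, dotProduct_smul, smul_eq_mul]
    nlinarith [mul_nonneg hlam.le hyy]
  have hxMx : 0 ≤ x ⬝ᵥ y := by
    have := hMps.dotProduct_mulVec_nonneg x
    rwa [star_trivial] at this
  have hcs := Finset.sum_mul_sq_le_sq_mul_sq Finset.univ w (fun i => φs i ⬝ᵥ y)
  have hsumw : 0 ≤ ∑ i, w i ^ 2 := Finset.sum_nonneg fun i _ => sq_nonneg _
  have step2 : x ⬝ᵥ y ≤ ∑ i, w i ^ 2 := by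
    have hsq : (x ⬝ᵥ y) ^ 2 ≤ (∑ i, w i ^ 2) * (x ⬝ᵥ y) := by
      calc (x ⬝ᵥ y) ^ 2 = (∑ i, w i * (φs i ⬝ᵥ y)) ^ 2 := by rw [hxy]
        _ ≤ (∑ i, w i ^ 2) * (∑ i, (φs i ⬝ᵥ y) ^ 2) := hcs
        _ ≤ (∑ i, w i ^ 2) * (x ⬝ᵥ y) := by
            apply mul_le_mul_of_nonneg_left _ hsumw
            rw [← hΛy]; exact hΛ_le
    rcases eq_or_lt_of_le hxMx with h0 | h0
    · rw [← h0]; exact hsumw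
    · nlinarith
  have hwH : ∑ i, w i ^ 2 ≤ H ^ 2 * ∑ i, c i ^ 2 := by
    rw [Finset.mul_sum]
    refine Finset.sum_le_sum fun i _ => ?_
    have h1 : V i ^ 2 ≤ H ^ 2 := by
      have := hV i
      nlinarith [abs_nonneg (V i), sq_abs (V i)]
    have : w i ^ 2 = c i ^ 2 * V i ^ 2 := by rw [hwdef]; ring
    rw [this]
    nlinarith [sq_nonneg (c i)]
  -- combine
  have hxfin : Real.sqrt (x ⬝ᵥ y) ≤ H * Real.sqrt (∑ i, c i ^ 2) := by
    calc Real.sqrt (x ⬝ᵥ y) ≤ Real.sqrt (H ^ 2 * ∑ i, c i ^ 2) :=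
          Real.sqrt_le_sqrt (le_trans step2 hwH)
      _ = H * Real.sqrt (∑ i, c i ^ 2) := by
          rw [Real.sqrt_mul (sq_nonneg H), Real.sqrt_sq hH]
  calc |φ ⬝ᵥ (M *ᵥ x)| ≤ Real.sqrt (φ ⬝ᵥ (M *ᵥ φ)) * Real.sqrt (x ⬝ᵥ y) := step1
    _ ≤ Real.sqrt (φ ⬝ᵥ (M *ᵥ φ)) * (H * Real.sqrt (∑ i, c i ^ 2)) :=
        mul_le_mul_of_nonneg_left hxfin (Real.sqrt_nonneg _)
    _ = H * Real.sqrt (φ ⬝ᵥ (M *ᵥ φ)) * Real.sqrt (∑ i, c i ^ 2) := by ring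
end

section
/- Let d, n ≥ 1, let φ_1, …, φ_n, φ ∈ ℝ^d, let λ > 0, and let e_1, …, e_n ∈ ℝ. Set Λ := Σ_{i=1}^n φ_i φ_iᵀ. Then |φᵀ (Λ + λI)⁻¹ Σ_{i=1}^n e_i φ_i| ≤ √(φᵀ (Λ + λI)⁻¹ φ) · √(Σ_{i=1}^n e_i²). -/
open Matrix Finset

/-- Pointwise deterministic self-normalized bound (the `T_{7b}` term): with `Λ = ∑ φᵢ φᵢᵀ`,
`|φᵀ (Λ + λI)⁻¹ ∑ eᵢ φᵢ| ≤ √(φᵀ (Λ + λI)⁻¹ φ) √(∑ eᵢ²)`. -/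
theorem pointwise_self_normalized_bound
    (d n : ℕ) (hd : 1 ≤ d) (hn : 1 ≤ n)
    (φs : Fin n → Fin d → ℝ) (φ : Fin d → ℝ)
    (lam : ℝ) (hlam : 0 < lam)
    (e : Fin n → ℝ) :
    |φ ⬝ᵥ (((∑ i, vecMulVec (φs i) (φs i)) + lam • (1 : Matrix (Fin d) (Fin d) ℝ))⁻¹ *ᵥ
        (∑ i, e i • φs i))| ≤
      Real.sqrt (φ ⬝ᵥ (((∑ i, vecMulVec (φs i) (φs i)) +
            lam • (1 : Matrix (Fin d) (Fin d) ℝ))⁻¹ *ᵥ φ)) *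
        Real.sqrt (∑ i, e i ^ 2) := by
  set Λ : Matrix (Fin d) (Fin d) ℝ := ∑ i, vecMulVec (φs i) (φs i) with hΛ
  set A : Matrix (Fin d) (Fin d) ℝ := Λ + lam • 1 with hA
  have hself : ∀ v : Fin d → ℝ, 0 ≤ v ⬝ᵥ v := fun v =>
    Finset.sum_nonneg fun i _ => mul_self_nonneg _
  have hΛmv : ∀ x : Fin d → ℝ, Λ *ᵥ x = ∑ i, (φs i ⬝ᵥ x) • φs i := by
    intro x
    ext j
    simp only [hΛ, mulVec, dotProduct, Matrix.sum_apply, vecMulVec_apply,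
      Finset.sum_apply, Pi.smul_apply, smul_eq_mul, Finset.sum_mul]
    rw [Finset.sum_comm]
    refine Finset.sum_congr rfl fun i _ => Finset.sum_congr rfl fun k _ => by ring
  have hΛquad : ∀ x : Fin d → ℝ, x ⬝ᵥ (Λ *ᵥ x) = ∑ i, (φs i ⬝ᵥ x) ^ 2 := by
    intro x
    rw [hΛmv]
    simp only [dotProduct, Finset.sum_apply, Pi.smul_apply, smul_eq_mul, sq,
      Finset.mul_sum]
    rw [Finset.sum_comm]
    refine Finset.sum_congr rfl fun i _ => ?_
    simp only [dotProduct, Finset.sum_mul, Finset.mul_sum]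
    refine Finset.sum_congr rfl fun j _ => ?_
    exact Finset.sum_congr rfl fun k _ => by ring
  have hAherm : A.IsHermitian := by
    rw [Matrix.IsHermitian]
    ext j k
    simp only [hA, hΛ, conjTranspose_apply, Matrix.add_apply, Matrix.sum_apply,
      vecMulVec_apply, Matrix.smul_apply, Matrix.one_apply, star_trivial]
    rw [eq_comm]
    congr 1
    · exact Finset.sum_congr rfl fun i _ => mul_comm _ _
    · simp [eq_comm]
  have hApd : A.PosDef := by
    refine Matrix.PosDef.of_dotProduct_mulVec_pos hAherm fun x hx => ?_
    have hst : star x = x := by simp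
    rw [hst, hA, Matrix.add_mulVec, dotProduct_add, hΛquad, Matrix.smul_mulVec,
      Matrix.one_mulVec, dotProduct_smul]
    have h1 : (0:ℝ) ≤ ∑ i, (φs i ⬝ᵥ x) ^ 2 := Finset.sum_nonneg fun i _ => sq_nonneg _
    have h2 : (0:ℝ) < x ⬝ᵥ x := by
      rcases lt_or_eq_of_le (hself x) with h | h
      · exact h
      · exact absurd ((dotProduct_self_eq_zero).mp h.symm) hx
    simp only [RCLike.re_to_real, smul_eq_mul]
    positivity
  have hdet : IsUnit A.det := isUnit_iff_ne_zero.mpr hApd.det_pos.ne'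
  set w : Fin d → ℝ := A⁻¹ *ᵥ φ with hw
  have hAinvsym : (A⁻¹)ᵀ = A⁻¹ := by
    have := hAherm.inv
    simpa [Matrix.IsHermitian, conjTranspose_eq_transpose_of_trivial] using this
  have hdot : ∀ x : Fin d → ℝ, φ ⬝ᵥ (A⁻¹ *ᵥ x) = w ⬝ᵥ x := by
    intro x
    rw [Matrix.dotProduct_mulVec, hw, ← Matrix.mulVec_transpose, hAinvsym]
  have hφw : φ = A *ᵥ w := by
    rw [hw, Matrix.mulVec_mulVec, Matrix.mul_nonsing_inv A hdet, Matrix.one_mulVec]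
  have hquadw : φ ⬝ᵥ (A⁻¹ *ᵥ φ) = (∑ i, (φs i ⬝ᵥ w) ^ 2) + lam * (w ⬝ᵥ w) := by
    rw [hdot φ]
    conv_lhs => rw [hφw]
    rw [hA, Matrix.add_mulVec, dotProduct_add, hΛquad,
      Matrix.smul_mulVec, Matrix.one_mulVec, dotProduct_smul, smul_eq_mul]
  have hLHS : φ ⬝ᵥ (A⁻¹ *ᵥ (∑ i, e i • φs i)) = ∑ i, e i * (φs i ⬝ᵥ w) := by
    rw [hdot]
    simp only [dotProduct, Finset.sum_apply, Pi.smul_apply, smul_eq_mul,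
      Finset.mul_sum]
    rw [Finset.sum_comm]
    refine Finset.sum_congr rfl fun i _ => ?_
    exact Finset.sum_congr rfl fun j _ => by ring
  rw [hLHS]
  have hcs : (∑ i, e i * (φs i ⬝ᵥ w)) ^ 2 ≤ (∑ i, e i ^ 2) * ∑ i, (φs i ⬝ᵥ w) ^ 2 :=
    Finset.sum_mul_sq_le_sq_mul_sq _ _ _
  have habs : |∑ i, e i * (φs i ⬝ᵥ w)| ≤
      Real.sqrt ((∑ i, e i ^ 2) * ∑ i, (φs i ⬝ᵥ w) ^ 2) := by
    rw [← Real.sqrt_sq_eq_abs]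
    exact Real.sqrt_le_sqrt hcs
  refine habs.trans ?_
  rw [Real.sqrt_mul (Finset.sum_nonneg fun i _ => sq_nonneg _), mul_comm]
  refine mul_le_mul_of_nonneg_right (Real.sqrt_le_sqrt ?_) (Real.sqrt_nonneg _)
  rw [hquadw]
  nlinarith [hself w, hlam.le, mul_nonneg hlam.le (hself w)]
end

section
/- Let Λ be a symmetric positive semidefinite d×d real matrix, let λ > 0, and let φ, v ∈ ℝ^d. Then |φᵀ (Λ + λI)⁻¹ Λ v − φᵀ v| ≤ √λ · ‖v‖₂ · √(φᵀ (Λ + λI)⁻¹ φ). -/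
open Matrix

private lemma dot_cs {d : ℕ} (x y : Fin d → ℝ) :
    |x ⬝ᵥ y| ≤ Real.sqrt (x ⬝ᵥ x) * Real.sqrt (y ⬝ᵥ y) := by
  have h := Finset.sum_mul_sq_le_sq_mul_sq Finset.univ x y
  have hxx : x ⬝ᵥ x = ∑ i, x i ^ 2 := by simp [dotProduct, sq]
  have hyy : y ⬝ᵥ y = ∑ i, y i ^ 2 := by simp [dotProduct, sq]
  have habs : |x ⬝ᵥ y| = Real.sqrt ((x ⬝ᵥ y) ^ 2) := (Real.sqrt_sq_eq_abs _).symm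
  rw [habs, hxx, hyy, ← Real.sqrt_mul (Finset.sum_nonneg fun i _ => sq_nonneg _)]
  exact Real.sqrt_le_sqrt h

private lemma herm_dot {d : ℕ} {M : Matrix (Fin d) (Fin d) ℝ} (hM : M.IsHermitian)
    (x y : Fin d → ℝ) : x ⬝ᵥ (M *ᵥ y) = (M *ᵥ x) ⬝ᵥ y := by
  have ht : Mᵀ = M := by rw [← conjTranspose_eq_transpose_of_trivial]; exact hM.eq
  rw [dotProduct_mulVec, ← mulVec_transpose, ht]

/-- Future-stage propagation bound (T₃/T₆): the residual from replacing the identity by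
`(Λ + λI)⁻¹Λ` satisfies `|φᵀ (Λ + λI)⁻¹ Λ v − φᵀ v| ≤ √λ ‖v‖₂ √(φᵀ (Λ + λI)⁻¹ φ)`. -/
theorem propagation_residual_bound
    (d : ℕ) (Λ : Matrix (Fin d) (Fin d) ℝ) (hΛ : Λ.PosSemidef)
    (lam : ℝ) (hlam : 0 < lam) (φ v : Fin d → ℝ) :
    |φ ⬝ᵥ (((Λ + lam • (1 : Matrix (Fin d) (Fin d) ℝ))⁻¹ * Λ) *ᵥ v) - φ ⬝ᵥ v| ≤
      Real.sqrt lam * Real.sqrt (v ⬝ᵥ v) *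
        Real.sqrt (φ ⬝ᵥ ((Λ + lam • (1 : Matrix (Fin d) (Fin d) ℝ))⁻¹ *ᵥ φ)) := by
  set A : Matrix (Fin d) (Fin d) ℝ := Λ + lam • (1 : Matrix (Fin d) (Fin d) ℝ) with hAdef
  have hsmul : (lam • (1 : Matrix (Fin d) (Fin d) ℝ)).PosDef := by
    rw [smul_one_eq_diagonal]
    exact .diagonal fun _ => hlam
  have hA : A.PosDef := Matrix.PosDef.posSemidef_add hΛ hsmul
  have hAinv : A⁻¹.PosDef := hA.inv
  have hB : A⁻¹.PosSemidef := hAinv.posSemidef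
  have hAunit : IsUnit A.det := isUnit_iff_ne_zero.mpr hA.det_pos.ne'
  have hinvA : A⁻¹ * A = 1 := nonsing_inv_mul A hAunit
  have hAinvA : A * A⁻¹ = 1 := mul_nonsing_inv A hAunit
  -- Key identity: A⁻¹ * Λ = 1 - lam • A⁻¹
  have hkey : A⁻¹ * Λ = 1 - lam • A⁻¹ := by
    have h1 : A⁻¹ * Λ + lam • A⁻¹ = 1 := by
      rw [← hinvA, hAdef, Matrix.mul_add, Matrix.mul_smul, Matrix.mul_one]
    rw [← h1]; abel
  have hLHS : φ ⬝ᵥ ((A⁻¹ * Λ) *ᵥ v) - φ ⬝ᵥ v = -(lam * (φ ⬝ᵥ (A⁻¹ *ᵥ v))) := by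
    rw [hkey, sub_mulVec, smul_mulVec, one_mulVec, dotProduct_sub, dotProduct_smul,
      smul_eq_mul]
    ring
  rw [hLHS, abs_neg, abs_mul, abs_of_pos hlam]
  -- square root of A⁻¹
  obtain ⟨S, hS, hSS⟩ : ∃ S : Matrix (Fin d) (Fin d) ℝ, S.PosSemidef ∧ S * S = A⁻¹ := by
    open scoped MatrixOrder in
    exact ⟨CFC.sqrt A⁻¹, (CFC.sqrt_nonneg A⁻¹).posSemidef, CFC.sqrt_mul_sqrt_self A⁻¹ hB.nonneg⟩
  -- rewrite quadratic forms via S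
  have hform : ∀ x y : Fin d → ℝ, x ⬝ᵥ (A⁻¹ *ᵥ y) = (S *ᵥ x) ⬝ᵥ (S *ᵥ y) := by
    intro x y
    rw [← hSS, ← mulVec_mulVec, herm_dot hS.isHermitian]
  -- Cauchy–Schwarz
  have hcs : |φ ⬝ᵥ (A⁻¹ *ᵥ v)| ≤
      Real.sqrt (φ ⬝ᵥ (A⁻¹ *ᵥ φ)) * Real.sqrt (v ⬝ᵥ (A⁻¹ *ᵥ v)) := by
    rw [hform φ v, hform φ φ, hform v v]
    exact dot_cs _ _
  -- Bound lam * (v ⬝ᵥ A⁻¹ v) ≤ v ⬝ᵥ v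
  have hquad : lam * (v ⬝ᵥ (A⁻¹ *ᵥ v)) ≤ v ⬝ᵥ v := by
    set w : Fin d → ℝ := A⁻¹ *ᵥ v with hw
    have hv : v = A *ᵥ w := by rw [hw, mulVec_mulVec, hAinvA, one_mulVec]
    have hvw : v ⬝ᵥ w = w ⬝ᵥ (A *ᵥ w) := by
      conv_lhs => rw [hv]
      rw [← herm_dot hA.isHermitian, dotProduct_comm]
    have hvv : v ⬝ᵥ v = w ⬝ᵥ ((A * A) *ᵥ w) := by
      conv_lhs => rw [hv, ← herm_dot hA.isHermitian, mulVec_mulVec]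
    have hAA : A * A = lam • A + A * Λ := by
      conv_lhs => rw [hAdef]
      rw [Matrix.mul_add, Matrix.mul_smul, Matrix.mul_one, add_comm]
    have hAΛ : (0:ℝ) ≤ w ⬝ᵥ ((A * Λ) *ᵥ w) := by
      have hAΛeq : A * Λ = Λ * Λ + lam • Λ := by
        rw [hAdef, Matrix.add_mul, Matrix.smul_mul, Matrix.one_mul]
      rw [hAΛeq, add_mulVec, dotProduct_add, smul_mulVec, dotProduct_smul, smul_eq_mul]
      have h1 : (0:ℝ) ≤ w ⬝ᵥ ((Λ * Λ) *ᵥ w) := by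
        have : w ⬝ᵥ ((Λ * Λ) *ᵥ w) = (Λ *ᵥ w) ⬝ᵥ (Λ *ᵥ w) := by
          rw [← mulVec_mulVec, herm_dot hΛ.isHermitian]
        rw [this, dotProduct]
        exact Finset.sum_nonneg fun i _ => mul_self_nonneg _
      have h2 : (0:ℝ) ≤ w ⬝ᵥ (Λ *ᵥ w) := by simpa using hΛ.dotProduct_mulVec_nonneg w
      nlinarith
    calc lam * (v ⬝ᵥ (A⁻¹ *ᵥ v)) = lam * (w ⬝ᵥ (A *ᵥ w)) := by rw [← hw, hvw]
    _ ≤ w ⬝ᵥ ((A * A) *ᵥ w) := by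
        have hsplit : w ⬝ᵥ ((lam • A + A * Λ) *ᵥ w)
            = lam * (w ⬝ᵥ (A *ᵥ w)) + w ⬝ᵥ ((A * Λ) *ᵥ w) := by
          rw [add_mulVec, dotProduct_add, smul_mulVec, dotProduct_smul, smul_eq_mul]
        rw [hAA, hsplit]
        linarith
    _ = v ⬝ᵥ v := hvv.symm
  -- assemble
  have hb : Real.sqrt lam * Real.sqrt (v ⬝ᵥ (A⁻¹ *ᵥ v)) ≤ Real.sqrt (v ⬝ᵥ v) := by
    rw [← Real.sqrt_mul hlam.le]
    exact Real.sqrt_le_sqrt hquad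
  have hlam' : Real.sqrt lam * Real.sqrt lam = lam := Real.mul_self_sqrt hlam.le
  have ha : (0:ℝ) ≤ Real.sqrt lam * Real.sqrt (φ ⬝ᵥ (A⁻¹ *ᵥ φ)) :=
    mul_nonneg (Real.sqrt_nonneg _) (Real.sqrt_nonneg _)
  calc lam * |φ ⬝ᵥ (A⁻¹ *ᵥ v)|
      ≤ lam * (Real.sqrt (φ ⬝ᵥ (A⁻¹ *ᵥ φ)) * Real.sqrt (v ⬝ᵥ (A⁻¹ *ᵥ v))) :=
        mul_le_mul_of_nonneg_left hcs hlam.le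
    _ = (Real.sqrt lam * Real.sqrt (v ⬝ᵥ (A⁻¹ *ᵥ v))) *
        (Real.sqrt lam * Real.sqrt (φ ⬝ᵥ (A⁻¹ *ᵥ φ))) := by
        linear_combination (Real.sqrt (φ ⬝ᵥ (A⁻¹ *ᵥ φ)) * Real.sqrt (v ⬝ᵥ (A⁻¹ *ᵥ v))) *
          hlam'.symm
    _ ≤ Real.sqrt (v ⬝ᵥ v) * (Real.sqrt lam * Real.sqrt (φ ⬝ᵥ (A⁻¹ *ᵥ φ))) :=
        mul_le_mul_of_nonneg_right hb ha
    _ = Real.sqrt lam * Real.sqrt (v ⬝ᵥ v) * Real.sqrt (φ ⬝ᵥ (A⁻¹ *ᵥ φ)) := by ring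
end

section
/- Let d, n ≥ 1, let φ_1, …, φ_n, φ ∈ ℝ^d, let λ > 0, let w ∈ ℝ^d, and let η_1, …, η_n ∈ ℝ. Set y_i := ⟨φ_i, w⟩ + η_i, Λ := Σ_{i=1}^n φ_i φ_iᵀ, and w* := (Λ + λI)⁻¹ Σ_{i=1}^n y_i φ_i. Then the pointwise prediction error satisfies |φᵀ (w* − w)| ≤ (√λ ‖w‖₂ + √(Σ_{i=1}^n η_i²)) · √(φᵀ (Λ + λI)⁻¹ φ). -/
open Matrix Finset

section RidgeAux

variable {d : ℕ}

private lemma ridge_dot_self_nonneg (z : Fin d → ℝ) : 0 ≤ z ⬝ᵥ z := by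
  simp only [dotProduct]
  exact Finset.sum_nonneg fun i _ => mul_self_nonneg (z i)

private lemma ridge_vecMulVec_mulVec (v x : Fin d → ℝ) :
    vecMulVec v v *ᵥ x = (v ⬝ᵥ x) • v := by
  ext i
  simp [vecMulVec_apply, mulVec, dotProduct, Finset.mul_sum, mul_comm, mul_left_comm]

private lemma ridge_sum_mulVec {n : ℕ} (M : Fin n → Matrix (Fin d) (Fin d) ℝ) (x : Fin d → ℝ) :
    (∑ i, M i) *ᵥ x = ∑ i, (M i *ᵥ x) := by
  ext j
  simp [mulVec, dotProduct, Matrix.sum_apply, Finset.sum_apply, Finset.sum_mul]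
  rw [Finset.sum_comm]

private lemma ridge_sum_dot {n : ℕ} (f : Fin n → Fin d → ℝ) (y : Fin d → ℝ) :
    (∑ i, f i) ⬝ᵥ y = ∑ i, (f i ⬝ᵥ y) := by
  simp only [dotProduct, Finset.sum_apply, Finset.sum_mul]
  rw [Finset.sum_comm]

private lemma ridge_dot_sum {n : ℕ} (y : Fin d → ℝ) (f : Fin n → Fin d → ℝ) :
    y ⬝ᵥ (∑ i, f i) = ∑ i, (y ⬝ᵥ f i) := by
  rw [dotProduct_comm, ridge_sum_dot]
  exact Finset.sum_congr rfl fun i _ => dotProduct_comm _ _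

private lemma ridge_symm_dot (B : Matrix (Fin d) (Fin d) ℝ) (hB : B.IsHermitian)
    (x y : Fin d → ℝ) : x ⬝ᵥ (B *ᵥ y) = y ⬝ᵥ (B *ᵥ x) := by
  have hs : Bᵀ = B := by
    have := hB
    rwa [IsHermitian, conjTranspose_eq_transpose_of_trivial] at this
  simp only [dotProduct, mulVec, Finset.mul_sum]
  rw [Finset.sum_comm]
  refine Finset.sum_congr rfl fun j _ => Finset.sum_congr rfl fun i _ => ?_
  have : B i j = B j i := by conv_lhs => rw [← hs, transpose_apply]
  rw [this]; ring

/-- Cauchy–Schwarz for the bilinear form of a positive semidefinite real matrix. -/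
private lemma ridge_cs_psd (B : Matrix (Fin d) (Fin d) ℝ) (hB : B.PosSemidef)
    (x y : Fin d → ℝ) :
    (x ⬝ᵥ (B *ᵥ y))^2 ≤ (x ⬝ᵥ (B *ᵥ x)) * (y ⬝ᵥ (B *ᵥ y)) := by
  have key : ∀ t : ℝ,
      0 ≤ (y ⬝ᵥ (B *ᵥ y)) * (t*t) + (2 * (x ⬝ᵥ (B *ᵥ y))) * t + (x ⬝ᵥ (B *ᵥ x)) := by
    intro t
    have h := hB.dotProduct_mulVec_nonneg (x + t • y)
    simp only [star_trivial] at h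
    rw [mulVec_add, mulVec_smul, dotProduct_add, add_dotProduct, add_dotProduct,
      dotProduct_smul, smul_dotProduct, smul_dotProduct] at h
    have hsym := ridge_symm_dot B hB.1 y x
    simp only [smul_eq_mul, dotProduct_smul, smul_eq_mul] at h
    rw [hsym] at h
    nlinarith [h]
  have hd := discrim_le_zero key
  rw [discrim] at hd
  nlinarith [hd]

end RidgeAux

/-- Deterministic core of the confidence-radius construction: with `yᵢ = ⟨φᵢ, w⟩ + ηᵢ`,
`Λ = ∑ φᵢφᵢᵀ` and `w* = (Λ + λI)⁻¹ ∑ yᵢφᵢ`, the pointwise prediction error satisfies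
`|φᵀ(w* − w)| ≤ (√λ ‖w‖₂ + √(∑ ηᵢ²)) √(φᵀ (Λ + λI)⁻¹ φ)`. -/
theorem ridge_pointwise_prediction_error
    (d n : ℕ) (hd : 1 ≤ d) (hn : 1 ≤ n)
    (φs : Fin n → Fin d → ℝ) (φ : Fin d → ℝ)
    (lam : ℝ) (hlam : 0 < lam)
    (w : Fin d → ℝ) (η : Fin n → ℝ) :
    |φ ⬝ᵥ ((((∑ i, vecMulVec (φs i) (φs i)) + lam • (1 : Matrix (Fin d) (Fin d) ℝ))⁻¹ *ᵥ
          (∑ i, (φs i ⬝ᵥ w + η i) • φs i)) - w)| ≤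
      (Real.sqrt lam * Real.sqrt (w ⬝ᵥ w) + Real.sqrt (∑ i, η i ^ 2)) *
        Real.sqrt (φ ⬝ᵥ (((∑ i, vecMulVec (φs i) (φs i)) +
            lam • (1 : Matrix (Fin d) (Fin d) ℝ))⁻¹ *ᵥ φ)) := by
  set Λ : Matrix (Fin d) (Fin d) ℝ := ∑ i, vecMulVec (φs i) (φs i) with hΛdef
  set A : Matrix (Fin d) (Fin d) ℝ := Λ + lam • 1 with hAdef
  -- quadratic form of Λ
  have hquadΛ : ∀ x : Fin d → ℝ, x ⬝ᵥ (Λ *ᵥ x) = ∑ i, (φs i ⬝ᵥ x)^2 := by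
    intro x
    rw [hΛdef, ridge_sum_mulVec, ridge_dot_sum]
    refine Finset.sum_congr rfl fun i _ => ?_
    rw [ridge_vecMulVec_mulVec, dotProduct_smul, smul_eq_mul, dotProduct_comm]
    ring
  have hΛ : Λ.PosSemidef := by
    rw [posSemidef_iff_dotProduct_mulVec]
    constructor
    · rw [IsHermitian, conjTranspose_eq_transpose_of_trivial]
      ext i j
      simp [hΛdef, Matrix.sum_apply, transpose_apply, vecMulVec_apply, mul_comm]
    · intro x
      rw [star_trivial, hquadΛ]
      exact Finset.sum_nonneg fun i _ => sq_nonneg _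
  have hsm : (lam • (1 : Matrix (Fin d) (Fin d) ℝ)).PosDef := by
    rw [posDef_iff_dotProduct_mulVec]
    constructor
    · rw [IsHermitian, conjTranspose_eq_transpose_of_trivial]
      ext i j
      simp only [transpose_apply, Matrix.smul_apply, Matrix.one_apply, smul_eq_mul]
      by_cases h : i = j <;> simp [h, eq_comm]
    · intro x hx
      rw [star_trivial, smul_mulVec, one_mulVec, dotProduct_smul, smul_eq_mul]
      have hxx : 0 < x ⬝ᵥ x := by
        have := (Matrix.dotProduct_star_self_pos_iff (v := x)).2 hx
        rwa [star_trivial] at this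
      exact mul_pos hlam hxx
  have hA : A.PosDef := Matrix.PosDef.posSemidef_add hΛ hsm
  have hdet : IsUnit A.det := isUnit_iff_ne_zero.2 hA.det_pos.ne'
  have hB : (A⁻¹).PosDef := hA.inv
  set B : Matrix (Fin d) (Fin d) ℝ := A⁻¹ with hBdef
  have hBA : ∀ x : Fin d → ℝ, B *ᵥ (A *ᵥ x) = x := by
    intro x
    rw [hBdef, mulVec_mulVec, Matrix.nonsing_inv_mul A hdet, one_mulVec]
  have hAB : ∀ x : Fin d → ℝ, A *ᵥ (B *ᵥ x) = x := by
    intro x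
    rw [hBdef, mulVec_mulVec, Matrix.mul_nonsing_inv A hdet, one_mulVec]
  have hquadA : ∀ x : Fin d → ℝ, x ⬝ᵥ (A *ᵥ x) = (∑ i, (φs i ⬝ᵥ x)^2) + lam * (x ⬝ᵥ x) := by
    intro x
    rw [hAdef, add_mulVec, dotProduct_add, hquadΛ, smul_mulVec, one_mulVec,
      dotProduct_smul, smul_eq_mul]
  set v : Fin d → ℝ := ∑ i, η i • φs i with hvdef
  -- rewrite the error vector
  have herr : B *ᵥ (∑ i, (φs i ⬝ᵥ w + η i) • φs i) - w = B *ᵥ v - lam • (B *ᵥ w) := by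
    have hsum : (∑ i, (φs i ⬝ᵥ w + η i) • φs i) = A *ᵥ w + (v - lam • w) := by
      have hΛw : Λ *ᵥ w = ∑ i, (φs i ⬝ᵥ w) • φs i := by
        rw [hΛdef, ridge_sum_mulVec]
        exact Finset.sum_congr rfl fun i _ => ridge_vecMulVec_mulVec _ _
      have hAw : A *ᵥ w = (∑ i, (φs i ⬝ᵥ w) • φs i) + lam • w := by
        rw [hAdef, add_mulVec, hΛw, smul_mulVec, one_mulVec]
      rw [hAw]
      simp only [add_smul, Finset.sum_add_distrib, ← hvdef]
      abel
    rw [hsum, mulVec_add, hBA, mulVec_sub, mulVec_smul]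
    abel
  have hφerr : φ ⬝ᵥ (B *ᵥ (∑ i, (φs i ⬝ᵥ w + η i) • φs i) - w)
      = φ ⬝ᵥ (B *ᵥ v) - lam * (φ ⬝ᵥ (B *ᵥ w)) := by
    rw [herr, dotProduct_sub, dotProduct_smul, smul_eq_mul]
  -- nonnegativity facts
  have hφBφ : 0 ≤ φ ⬝ᵥ (B *ᵥ φ) := by
    have := hB.posSemidef.dotProduct_mulVec_nonneg φ; rwa [star_trivial] at this
  have hvBv : 0 ≤ v ⬝ᵥ (B *ᵥ v) := by
    have := hB.posSemidef.dotProduct_mulVec_nonneg v; rwa [star_trivial] at this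
  have hwBw : 0 ≤ w ⬝ᵥ (B *ᵥ w) := by
    have := hB.posSemidef.dotProduct_mulVec_nonneg w; rwa [star_trivial] at this
  -- key bound 1 : v⬝Bv ≤ ∑ η²
  have hkey1 : v ⬝ᵥ (B *ᵥ v) ≤ ∑ i, η i ^ 2 := by
    have he1 : v ⬝ᵥ (B *ᵥ v) = ∑ i, η i * (φs i ⬝ᵥ (B *ᵥ v)) := by
      conv_lhs => rw [hvdef]
      rw [ridge_sum_dot]
      exact Finset.sum_congr rfl fun i _ => by rw [smul_dotProduct, smul_eq_mul]
    have he3 : (B *ᵥ v) ⬝ᵥ (A *ᵥ (B *ᵥ v)) = v ⬝ᵥ (B *ᵥ v) := by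
      rw [hAB v, dotProduct_comm]
    have he4 : (∑ i, (φs i ⬝ᵥ (B *ᵥ v))^2) ≤ v ⬝ᵥ (B *ᵥ v) := by
      have hq := hquadA (B *ᵥ v)
      nlinarith [ridge_dot_self_nonneg (B *ᵥ v), he3,
        mul_nonneg hlam.le (ridge_dot_self_nonneg (B *ᵥ v))]
    have hcs : (∑ i, η i * (φs i ⬝ᵥ (B *ᵥ v)))^2
        ≤ (∑ i, η i ^ 2) * (∑ i, (φs i ⬝ᵥ (B *ᵥ v))^2) :=
      Finset.sum_mul_sq_le_sq_mul_sq _ _ _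
    have hη2 : 0 ≤ ∑ i, η i ^ 2 := Finset.sum_nonneg fun i _ => sq_nonneg _
    nlinarith [he1, hcs, he4, hvBv, hη2]
  -- key bound 2 : lam * (w⬝Bw) ≤ w⬝w
  have hkey2 : lam * (w ⬝ᵥ (B *ᵥ w)) ≤ w ⬝ᵥ w := by
    have he3 : (B *ᵥ w) ⬝ᵥ (A *ᵥ (B *ᵥ w)) = w ⬝ᵥ (B *ᵥ w) := by
      rw [hAB w, dotProduct_comm]
    have hlamu : lam * ((B *ᵥ w) ⬝ᵥ (B *ᵥ w)) ≤ w ⬝ᵥ (B *ᵥ w) := by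
      have hq := hquadA (B *ᵥ w)
      nlinarith [Finset.sum_nonneg (fun i (_ : i ∈ Finset.univ) => sq_nonneg (φs i ⬝ᵥ (B *ᵥ w))),
        he3]
    have hcs : ((B *ᵥ w) ⬝ᵥ w)^2 ≤ ((B *ᵥ w) ⬝ᵥ (B *ᵥ w)) * (w ⬝ᵥ w) := by
      have := Finset.sum_mul_sq_le_sq_mul_sq Finset.univ (B *ᵥ w) w
      simpa [dotProduct, pow_two] using this
    have hcomm : (B *ᵥ w) ⬝ᵥ w = w ⬝ᵥ (B *ᵥ w) := dotProduct_comm _ _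
    have hww : 0 ≤ w ⬝ᵥ w := ridge_dot_self_nonneg w
    have hcs' : (w ⬝ᵥ (B *ᵥ w))^2 ≤ ((B *ᵥ w) ⬝ᵥ (B *ᵥ w)) * (w ⬝ᵥ w) := by
      rw [← hcomm]; exact hcs
    rcases eq_or_lt_of_le hwBw with h0 | h0
    · rw [← h0, mul_zero]; exact hww
    · have h5 : lam * (w ⬝ᵥ (B *ᵥ w)) * (w ⬝ᵥ (B *ᵥ w)) ≤ (w ⬝ᵥ w) * (w ⬝ᵥ (B *ᵥ w)) := by
        nlinarith [mul_le_mul_of_nonneg_left hcs' hlam.le,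
          mul_le_mul_of_nonneg_right hlamu hww]
      exact le_of_mul_le_mul_right h5 h0
  -- assemble
  have hcs1 : (φ ⬝ᵥ (B *ᵥ v))^2 ≤ (φ ⬝ᵥ (B *ᵥ φ)) * (v ⬝ᵥ (B *ᵥ v)) :=
    ridge_cs_psd B hB.posSemidef φ v
  have hcs2 : (φ ⬝ᵥ (B *ᵥ w))^2 ≤ (φ ⬝ᵥ (B *ᵥ φ)) * (w ⬝ᵥ (B *ᵥ w)) :=
    ridge_cs_psd B hB.posSemidef φ w
  have h1 : |φ ⬝ᵥ (B *ᵥ v)| ≤ Real.sqrt (∑ i, η i ^ 2) * Real.sqrt (φ ⬝ᵥ (B *ᵥ φ)) := by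
    rw [← Real.sqrt_sq_eq_abs, ← Real.sqrt_mul (Finset.sum_nonneg fun i _ => sq_nonneg (η i)) _]
    apply Real.sqrt_le_sqrt
    calc (φ ⬝ᵥ (B *ᵥ v))^2 ≤ (φ ⬝ᵥ (B *ᵥ φ)) * (v ⬝ᵥ (B *ᵥ v)) := hcs1
      _ ≤ (∑ i, η i ^ 2) * (φ ⬝ᵥ (B *ᵥ φ)) := by nlinarith [hkey1, hφBφ, hvBv]
  have h2 : lam * |φ ⬝ᵥ (B *ᵥ w)| ≤
      Real.sqrt lam * Real.sqrt (w ⬝ᵥ w) * Real.sqrt (φ ⬝ᵥ (B *ᵥ φ)) := by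
    have hww : 0 ≤ w ⬝ᵥ w := ridge_dot_self_nonneg w
    have hlhs : lam * |φ ⬝ᵥ (B *ᵥ w)| = Real.sqrt (lam^2 * (φ ⬝ᵥ (B *ᵥ w))^2) := by
      rw [Real.sqrt_mul (sq_nonneg lam), Real.sqrt_sq hlam.le, Real.sqrt_sq_eq_abs]
    rw [hlhs, mul_assoc, ← Real.sqrt_mul hww, ← Real.sqrt_mul hlam.le]
    apply Real.sqrt_le_sqrt
    have hmul := mul_le_mul_of_nonneg_left hkey2 (mul_nonneg hlam.le hφBφ)
    calc lam^2 * (φ ⬝ᵥ (B *ᵥ w))^2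
        ≤ lam^2 * ((φ ⬝ᵥ (B *ᵥ φ)) * (w ⬝ᵥ (B *ᵥ w))) := by nlinarith [hcs2, sq_nonneg lam]
      _ ≤ lam * ((w ⬝ᵥ w) * (φ ⬝ᵥ (B *ᵥ φ))) := by nlinarith [hmul]
  calc |φ ⬝ᵥ (B *ᵥ (∑ i, (φs i ⬝ᵥ w + η i) • φs i) - w)|
      = |φ ⬝ᵥ (B *ᵥ v) - lam * (φ ⬝ᵥ (B *ᵥ w))| := by rw [hφerr]
    _ ≤ |φ ⬝ᵥ (B *ᵥ v)| + lam * |φ ⬝ᵥ (B *ᵥ w)| :=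
        (abs_sub _ _).trans (by rw [abs_mul, abs_of_pos hlam])
    _ ≤ Real.sqrt (∑ i, η i ^ 2) * Real.sqrt (φ ⬝ᵥ (B *ᵥ φ)) +
        Real.sqrt lam * Real.sqrt (w ⬝ᵥ w) * Real.sqrt (φ ⬝ᵥ (B *ᵥ φ)) := add_le_add h1 h2
    _ = (Real.sqrt lam * Real.sqrt (w ⬝ᵥ w) + Real.sqrt (∑ i, η i ^ 2)) *
        Real.sqrt (φ ⬝ᵥ (B *ᵥ φ)) := by ring
end
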